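/- arXiv:0704.0885 — 3 statements merged into one kernel-verified Lean document; each statement's English description precedes it below -/
import Mathlib

section
/- Let X be a uniform space and μ a bounded linear functional on the Banach space U_b(X) of bounded uniformly continuous real-valued functions. Then μ is sequentially continuous on Lip(d) (with the topology of pointwise convergence) for every uniformly continuous pseudometric d on X if and only if μ is continuous on Lip(d) for every separable uniformly continuous pseudometric d on X. -/
open Filter MeasureTheory Topology Set

/-- `d` is a pseudometric on `X`. -/
def IsPseudometric {X : Type*} (d : X → X → ℝ) : Prop :=
  (∀ x, d x x = 0) ∧ (∀ x y, d x y = d y x) ∧ (∀ x y, 0 ≤ d x y) ∧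
    ∀ x y z, d x z ≤ d x y + d y z

/-- `Lip d`: functions bounded by 1 that are 1-Lipschitz for `d`. -/
def Lip {X : Type*} (d : X → X → ℝ) : Set (X → ℝ) :=
  {f | (∀ x, |f x| ≤ 1) ∧ ∀ x x', |f x - f x'| ≤ d x x'}

/-- `U` is open in the (possibly non-Hausdorff) topology induced by the pseudometric `d`. -/
def DOpen {X : Type*} (d : X → X → ℝ) (U : Set X) : Prop :=
  ∀ x ∈ U, ∃ ε > 0, ∀ y, d x y < ε → y ∈ U

/-- `U` is a cozero set of a bounded uniformly continuous real function on `X`. -/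
def IsCozero (X : Type*) [UniformSpace X] (U : Set X) : Prop :=
  ∃ f : X → ℝ, UniformContinuous f ∧ (∃ C, ∀ x, |f x| ≤ C) ∧ U = {x | f x ≠ 0}

/-- The σ-algebra generated by the cozero sets of `X`. -/
def cozMS (X : Type*) [UniformSpace X] : MeasurableSpace X :=
  MeasurableSpace.generateFrom {U | IsCozero X U}

/-- The pseudometric topology of `d` is separable. -/
def DSeparable {X : Type*} (d : X → X → ℝ) : Prop :=
  ∃ D : Set X, D.Countable ∧ ∀ x : X, ∀ ε : ℝ, 0 < ε → ∃ p ∈ D, d x p < ε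

/-- The cardinality of `A` has measure zero: every finite nonnegative countably additive
measure on the power set of `A` vanishing on singletons is zero. -/
def HasMeasureZero (A : Type*) : Prop :=
  ∀ m : @MeasureTheory.Measure A ⊤, @MeasureTheory.IsFiniteMeasure A ⊤ m →
    (∀ a : A, m {a} = 0) → m Set.univ = 0

/-- `Y` is a uniformly discrete subset of the uniform space `X`. -/
def UniformlyDiscrete {X : Type*} [UniformSpace X] (Y : Set X) : Prop :=
  ∃ d : X → X → ℝ, IsPseudometric d ∧ (UniformContinuous fun p : X × X => d p.1 p.2) ∧
    ∃ ε > 0, ∀ y ∈ Y, ∀ y' ∈ Y, y ≠ y' → ε ≤ d y y'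

/-- `X` is a uniform D-space. -/
def IsDSpace (X : Type*) [UniformSpace X] : Prop :=
  ∀ Y : Set X, UniformlyDiscrete Y → HasMeasureZero Y

/-- Distance from a point to a set. -/
noncomputable def distSet {X : Type*} (d : X → X → ℝ) (S : Set X) (x : X) : ℝ :=
  sInf ((d x) '' S)

/-- `fS d S x = min 1 (d(x,S))`, with the convention `fS d ∅ = 1`. -/
noncomputable def fS {X : Type*} (d : X → X → ℝ) (S : Set X) (x : X) : ℝ :=
  @ite _ S.Nonempty (Classical.propDecidable _) (min 1 (distSet d S x)) 1

/-!
(⇐) For a pointwise null sequence `fₙ` in `Lip d`, the pseudometric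
`ρ x y = ⨆ n, |fₙ x - fₙ y|` is dominated by `d`, hence uniformly continuous, every `fₙ` lies in
`Lip ρ`, and `ρ` is separable because `x ↦ (fₙ x)ₙ` maps `(X, ρ)` isometrically into `c₀`.

(⇒) Let `(eₖ)` be `d`-dense. Sequential continuity gives, for each `ε > 0`, finitely many `eₖ` and
a `δ > 0` such that `|g eₖ| ≤ δ` for those `k` forces `|μ g| < ε` on `Lip d`: otherwise
counterexamples `gₙ` would tend to `0` at every `eₖ`, hence everywhere by equicontinuity. Such a
finite control works for nets as well as for sequences.
-/

open Uniformity

namespace IsPseudometric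

variable {X : Type*} {d : X → X → ℝ}

lemma abs_sub_le (hd : IsPseudometric d) (x y x' y' : X) :
    |d x y - d x' y'| ≤ d x x' + d y y' := by
  obtain ⟨-, hsymm, -, htri⟩ := hd
  rw [abs_sub_le_iff]
  constructor
  · linarith [htri x x' y, htri x' y' y, hsymm y' y]
  · linarith [htri x' x y', htri x y y', hsymm x' x]

lemma uniformContinuous_iff [UniformSpace X] (hd : IsPseudometric d) :
    (UniformContinuous fun p : X × X => d p.1 p.2) ↔
      ∀ ε > 0, {p : X × X | d p.1 p.2 < ε} ∈ 𝓤 X := by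
  constructor
  · intro hdu ε hε
    -- `d a b = |d a a - d a b|`, and `((a, a), (a, b))` is close in `X × X` when `(a, b)` is
    have hdiag : Tendsto (fun p : X × X => ((p.1, p.1), p)) (𝓤 X) (𝓤 (X × X)) := by
      rw [uniformity_prod_eq_prod]
      exact tendsto_map.comp ((tendsto_diag_uniformity Prod.fst _).prodMk tendsto_id)
    filter_upwards [(Tendsto.comp hdu hdiag) (Metric.dist_mem_uniformity hε)] with p hp
    simpa [Real.dist_eq, hd.1, abs_of_nonneg (hd.2.2.1 _ _)] using hp
  · intro h
    rw [UniformContinuous, uniformity_prod_eq_prod, tendsto_map'_iff,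
      Metric.uniformity_basis_dist.tendsto_right_iff]
    intro ε hε
    filter_upwards [prod_mem_prod (h _ (half_pos hε)) (h _ (half_pos hε))] with p ⟨hp₁, hp₂⟩
    simp only [mem_ofPred_eq, Function.comp_apply, Real.dist_eq] at hp₁ hp₂ ⊢
    linarith [hd.abs_sub_le p.1.1 p.2.1 p.1.2 p.2.2]

lemma uniformContinuous_of_le [UniformSpace X] {ρ : X → X → ℝ} (hρ : IsPseudometric ρ)
    (hd : IsPseudometric d) (hdu : UniformContinuous fun p : X × X => d p.1 p.2)
    (hle : ∀ x y, ρ x y ≤ d x y) : UniformContinuous fun p : X × X => ρ p.1 p.2 :=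
  hρ.uniformContinuous_iff.2 fun ε hε =>
    mem_of_superset (hd.uniformContinuous_iff.1 hdu ε hε) fun _ hp => (hle _ _).trans_lt hp

end IsPseudometric

lemma DSeparable.of_forall_exists_code {X C : Type*} [Countable C] {d : X → X → ℝ}
    (h : ∀ ε > 0, ∃ c : X → C, ∀ x y, c x = c y → d x y < ε) : DSeparable d := by
  choose c hc using fun k : ℕ => h (1 / (k + 1)) Nat.one_div_pos_of_nat
  choose D hDc hDinj using fun k => exists_image_eq_and_injOn univ (c k)
  refine ⟨⋃ k, D k, countable_iUnion fun k =>
    (mapsTo_univ _ _).countable_of_injOn (hDinj k) (to_countable _), fun x ε hε => ?_⟩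
  obtain ⟨k, hk⟩ := exists_nat_one_div_lt hε
  obtain ⟨p, hp, hpx⟩ : c k x ∈ c k '' D k := hDc k ▸ mem_image_of_mem _ (mem_univ x)
  exact ⟨p, mem_iUnion.2 ⟨k, hp⟩, (hc k x p hpx.symm).trans hk⟩

noncomputable def supDist {X : Type*} (f : ℕ → X → ℝ) (x y : X) : ℝ :=
  ⨆ n, |f n x - f n y|

section supDist

variable {X : Type*} {f : ℕ → X → ℝ}

lemma bddAbove_range_abs_sub {B : ℝ} (hB : ∀ n x, |f n x| ≤ B) (x y : X) :
    BddAbove (range fun n => |f n x - f n y|) :=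
  ⟨2 * B, by rintro _ ⟨n, rfl⟩; linarith [abs_sub (f n x) (f n y), hB n x, hB n y]⟩

lemma abs_sub_le_supDist {B : ℝ} (hB : ∀ n x, |f n x| ≤ B) (n : ℕ) (x y : X) :
    |f n x - f n y| ≤ supDist f x y :=
  le_ciSup (bddAbove_range_abs_sub hB x y) n

lemma supDist_le {d : X → X → ℝ} (hf : ∀ n x y, |f n x - f n y| ≤ d x y) (x y : X) :
    supDist f x y ≤ d x y :=
  ciSup_le fun n => hf n x y

lemma isPseudometric_supDist {B : ℝ} (hB : ∀ n x, |f n x| ≤ B) :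
    IsPseudometric (supDist f) :=
  ⟨fun x => by simp [supDist], fun x y => by simp only [supDist, abs_sub_comm],
    fun _ _ => Real.iSup_nonneg fun _ => abs_nonneg _,
    fun x y z => ciSup_le fun n => (abs_sub_le _ _ _).trans
      (add_le_add (abs_sub_le_supDist hB n x y) (abs_sub_le_supDist hB n y z))⟩

lemma dSeparable_supDist (hf0 : ∀ x, Tendsto (fun n => f n x) atTop (𝓝 0)) :
    DSeparable (supDist f) := by
  refine DSeparable.of_forall_exists_code (C := List ℤ) fun ε hε => ?_
  have hη : 0 < ε / 3 := by positivity
  choose N hN using fun x => Metric.tendsto_atTop.1 (hf0 x) (ε / 3) hη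
  -- code of `x`: the values `f n x` for `n < N x`, rounded down to the grid `(ε / 3) ℤ`
  refine ⟨fun x => (List.range (N x)).map fun n => ⌊f n x / (ε / 3)⌋, fun x y hxy => ?_⟩
  have hNxy : N x = N y := by simpa using congrArg List.length hxy
  simp only [hNxy] at hxy
  have hclose : ∀ n, |f n x - f n y| ≤ 2 * (ε / 3) := by
    intro n
    rcases lt_or_ge n (N y) with hn | hn
    · have hfloor := Int.abs_sub_lt_one_of_floor_eq_floor
        (List.map_inj_left.1 hxy n (List.mem_range.2 hn))
      rw [← sub_div, abs_div, abs_of_pos hη, div_lt_one hη] at hfloor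
      linarith
    · have hx := hN x n (hNxy ▸ hn)
      have hy := hN y n hn
      rw [Real.dist_eq, sub_zero] at hx hy
      linarith [abs_sub (f n x) (f n y)]
  calc supDist f x y ≤ 2 * (ε / 3) := ciSup_le hclose
    _ < ε := by linarith

end supDist

lemma DSeparable.exists_denseSeq {X : Type*} [Nonempty X] {d : X → X → ℝ} (hd : DSeparable d) :
    ∃ e : ℕ → X, ∀ x ε, 0 < ε → ∃ k, d x (e k) < ε := by
  obtain ⟨D, hDc, hD⟩ := hd
  obtain ⟨p, hp, -⟩ := hD (Classical.arbitrary X) 1 one_pos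
  obtain ⟨e, rfl⟩ := hDc.exists_eq_range ⟨p, hp⟩
  exact ⟨e, fun x ε hε => by obtain ⟨_, ⟨k, rfl⟩, hk⟩ := hD x ε hε; exact ⟨k, hk⟩⟩

def SeqContinuousOnLip {X : Type*} (μ : (X → ℝ) → ℝ) (d : X → X → ℝ) : Prop :=
  ∀ f : ℕ → X → ℝ, (∀ n, f n ∈ Lip d) → (∀ x, Tendsto (fun n => f n x) atTop (𝓝 0)) →
    Tendsto (fun n => μ (f n)) atTop (𝓝 0)

section DenseSeq

variable {X : Type*} {d : X → X → ℝ} {e : ℕ → X}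

lemma tendsto_zero_of_tendsto_zero_denseSeq (he : ∀ x ε, 0 < ε → ∃ k, d x (e k) < ε)
    {ι : Type*} {l : Filter ι} {g : ι → X → ℝ} (hg : ∀ i x x', |g i x - g i x'| ≤ d x x')
    (hge : ∀ k, Tendsto (fun i => g i (e k)) l (𝓝 0)) (x : X) :
    Tendsto (fun i => g i x) l (𝓝 0) := by
  rw [Metric.tendsto_nhds]
  intro ε hε
  obtain ⟨k, hk⟩ := he x (ε / 2) (half_pos hε)
  filter_upwards [Metric.tendsto_nhds.1 (hge k) (ε / 2) (half_pos hε)] with i hi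
  rw [Real.dist_eq, sub_zero] at hi ⊢
  linarith [abs_sub_abs_le_abs_sub (g i x) (g i (e k)), hg i x (e k)]

variable {μ : (X → ℝ) → ℝ}

lemma SeqContinuousOnLip.exists_control (hμ : SeqContinuousOnLip μ d)
    (he : ∀ x ε, 0 < ε → ∃ k, d x (e k) < ε) {ε : ℝ} (hε : 0 < ε) :
    ∃ N : ℕ, ∃ δ > 0, ∀ g ∈ Lip d, (∀ k < N, |g (e k)| ≤ δ) → |μ g| < ε := by
  by_contra! hcon
  choose g hgLip hge hgμ using fun n : ℕ => hcon n (1 / (n + 1)) Nat.one_div_pos_of_nat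
  have hge0 (k : ℕ) : Tendsto (fun n => g n (e k)) atTop (𝓝 0) :=
    squeeze_zero_norm' ((eventually_gt_atTop k).mono fun n hn => hge n k hn)
      tendsto_one_div_add_atTop_nhds_zero_nat
  obtain ⟨N, hN⟩ := Metric.tendsto_atTop.1
    (hμ g hgLip (tendsto_zero_of_tendsto_zero_denseSeq he (fun n => (hgLip n).2) hge0)) ε hε
  have hsmall := hN N le_rfl
  rw [Real.dist_eq, sub_zero] at hsmall
  exact (hgμ N).not_gt hsmall

lemma SeqContinuousOnLip.tendsto (hμ : SeqContinuousOnLip μ d)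
    (he : ∀ x ε, 0 < ε → ∃ k, d x (e k) < ε) {ι : Type*} {l : Filter ι} {f : ι → X → ℝ}
    (hf : ∀ i, f i ∈ Lip d) (hf0 : ∀ x, Tendsto (fun i => f i x) l (𝓝 0)) :
    Tendsto (fun i => μ (f i)) l (𝓝 0) := by
  rw [Metric.tendsto_nhds]
  intro ε hε
  obtain ⟨N, δ, hδ, hctrl⟩ := hμ.exists_control he hε
  have hsmall : ∀ᶠ i in l, ∀ k ∈ {k | k < N}, |f i (e k)| ≤ δ := by
    refine (eventually_all_finite (finite_lt_nat N)).2 fun k _ => ?_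
    filter_upwards [Metric.tendsto_nhds.1 (hf0 (e k)) δ hδ] with i hi
    simpa [Real.dist_eq] using hi.le
  filter_upwards [hsmall] with i hi
  simpa [Real.dist_eq] using hctrl (f i) (hf i) hi

end DenseSeq

theorem seqCont_iff_cont_separable_general {X : Type u} [UniformSpace X]
    (μ : (X → ℝ) →ₗ[ℝ] ℝ) :
    (∀ d : X → X → ℝ, IsPseudometric d →
        (UniformContinuous fun p : X × X => d p.1 p.2) →
        ∀ f : ℕ → X → ℝ, (∀ n, f n ∈ Lip d) →
          (∀ x, Tendsto (fun n => f n x) atTop (𝓝 0)) →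
          Tendsto (fun n => μ (f n)) atTop (𝓝 0)) ↔
    (∀ d : X → X → ℝ, IsPseudometric d →
        (UniformContinuous fun p : X × X => d p.1 p.2) → DSeparable d →
        ∀ (ι : Type u) (pι : Preorder ι), IsDirected ι pι.le → Nonempty ι →
          ∀ f : ι → X → ℝ, (∀ i, f i ∈ Lip d) →
            (∀ x, Tendsto (fun i => f i x) (@Filter.atTop ι pι) (𝓝 0)) →
            Tendsto (fun i => μ (f i)) (@Filter.atTop ι pι) (𝓝 0)) := by
  constructor
  · intro h d hd hdu hsep ι _ _ _ f hf hf0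
    rcases isEmpty_or_nonempty X with _ | _
    · simp [Subsingleton.elim (f _) 0]
    · obtain ⟨e, he⟩ := hsep.exists_denseSeq
      exact SeqContinuousOnLip.tendsto (h d hd hdu) he hf hf0
  · intro h d hd hdu f hf hf0
    have hB (n : ℕ) (x : X) : |f n x| ≤ 1 := (hf n).1 x
    have hρ := isPseudometric_supDist hB
    have hρu := hρ.uniformContinuous_of_le hd hdu (supDist_le fun n => (hf n).2)
    have hnet := h (supDist f) hρ hρu (dSeparable_supDist hf0) (ULift.{u} ℕ) inferInstance
      inferInstance inferInstance (fun i => f i.down)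
      (fun i => ⟨hB i.down, abs_sub_le_supDist hB i.down⟩)
      (fun x => (hf0 x).comp (ULift.orderIso.{u} (α := ℕ)).tendsto_atTop)
    exact hnet.comp (ULift.orderIso.{u} (α := ℕ)).symm.tendsto_atTop

/-- a bounded linear functional on `U_b(X)` is sequentially continuous on
`Lip d` for every u.c. pseudometric `d` iff it is continuous (for nets) on `Lip d`
for every separable u.c. pseudometric `d`. -/
theorem seqCont_iff_cont_separable {X : Type u} [UniformSpace X]
    (μ : (X → ℝ) →ₗ[ℝ] ℝ)
    (hbdd : ∃ C : ℝ, ∀ f : X → ℝ, UniformContinuous f → ∀ B : ℝ,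
      (∀ x, |f x| ≤ B) → |μ f| ≤ C * B) :
    (∀ d : X → X → ℝ, IsPseudometric d →
        (UniformContinuous fun p : X × X => d p.1 p.2) →
        ∀ f : ℕ → X → ℝ, (∀ n, f n ∈ Lip d) →
          (∀ x, Tendsto (fun n => f n x) atTop (𝓝 0)) →
          Tendsto (fun n => μ (f n)) atTop (𝓝 0)) ↔
    (∀ d : X → X → ℝ, IsPseudometric d →
        (UniformContinuous fun p : X × X => d p.1 p.2) → DSeparable d →
        ∀ (ι : Type u) (pι : Preorder ι), IsDirected ι pι.le → Nonempty ι →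
          ∀ f : ι → X → ℝ, (∀ i, f i ∈ Lip d) →
            (∀ x, Tendsto (fun i => f i x) (@Filter.atTop ι pι) (𝓝 0)) →
            Tendsto (fun i => μ (f i)) (@Filter.atTop ι pι) (𝓝 0)) :=
  seqCont_iff_cont_separable_general μ
end

section
/- Let X be a uniform space that is not a uniform D-space, i.e., X contains a uniformly discrete subset whose cardinality does not have measure zero. Then there exists a bounded countably additive measure m on the σ-algebra generated by the cozero sets of X such that the functional μ(f) = ∫ f dm on U_b(X) is not a uniform measure: there is a uniformly continuous pseudometric d on X and a net in Lip(d) converging pointwise to 0 on which μ does not converge to 0. -/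
open Filter MeasureTheory Topology Set

/-! Rescale the pseudometric so that `Y` is `1`-separated and push `ν` forward to `X`. For finite
`F ⊆ Y` the function `fS d F - fS d Y` is `2`-Lipschitz and tends to `0` pointwise as `F` grows,
because `d(x, F)` decreases to `d(x, Y)`; but it equals `1` on `Y \ F`, and `ν` vanishes on
finite sets, so its integral is `ν(Y) ≠ 0` for every `F`. -/

section Pseudometric

variable {X : Type*} {d : X → X → ℝ}

lemma IsPseudometric.const_mul (hd : IsPseudometric d) {c : ℝ} (hc : 0 ≤ c) :
    IsPseudometric fun x y => c * d x y := by
  obtain ⟨h0, hsymm, hnn, htri⟩ := hd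
  refine ⟨fun x => by simp [h0], fun x y => by simp only [hsymm x y],
    fun x y => mul_nonneg hc (hnn x y), fun x y z => ?_⟩
  rw [← mul_add]
  exact mul_le_mul_of_nonneg_left (htri x y z) hc

lemma distSet_le_of_mem (hd : IsPseudometric d) {S : Set X} {s : X} (hs : s ∈ S) (x : X) :
    distSet d S x ≤ d x s :=
  csInf_le ⟨0, by rintro _ ⟨t, -, rfl⟩; exact hd.2.2.1 x t⟩ (mem_image_of_mem _ hs)

lemma le_distSet {S : Set X} (hS : S.Nonempty) {x : X} {r : ℝ} (h : ∀ s ∈ S, r ≤ d x s) :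
    r ≤ distSet d S x :=
  le_csInf (hS.image _) (by rintro _ ⟨s, hs, rfl⟩; exact h s hs)

lemma distSet_nonneg (hd : IsPseudometric d) {S : Set X} (hS : S.Nonempty) (x : X) :
    0 ≤ distSet d S x :=
  le_distSet hS fun s _ => hd.2.2.1 x s

lemma distSet_eq_zero_of_mem (hd : IsPseudometric d) {S : Set X} {x : X} (hx : x ∈ S) :
    distSet d S x = 0 :=
  le_antisymm (hd.1 x ▸ distSet_le_of_mem hd hx x) (distSet_nonneg hd ⟨x, hx⟩ x)

lemma distSet_anti (hd : IsPseudometric d) {S T : Set X} (hS : S.Nonempty) (hST : S ⊆ T)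
    (x : X) : distSet d T x ≤ distSet d S x :=
  le_distSet hS fun _ hs => distSet_le_of_mem hd (hST hs) x

lemma distSet_le_add (hd : IsPseudometric d) {S : Set X} (hS : S.Nonempty) (x y : X) :
    distSet d S x ≤ d x y + distSet d S y := by
  have : distSet d S x - d x y ≤ distSet d S y :=
    le_distSet hS fun s hs => by linarith [distSet_le_of_mem hd hs x, hd.2.2.2 x y s]
  linarith

lemma abs_distSet_sub_le (hd : IsPseudometric d) {S : Set X} (hS : S.Nonempty) (x y : X) :
    |distSet d S x - distSet d S y| ≤ d x y := by
  have hxy := distSet_le_add hd hS x y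
  have hyx := distSet_le_add hd hS y x
  rw [hd.2.1 y x] at hyx
  exact abs_sub_le_iff.2 ⟨by linarith, by linarith⟩

lemma fS_of_nonempty {S : Set X} (hS : S.Nonempty) (x : X) :
    fS d S x = min 1 (distSet d S x) := by
  simp [fS, hS]

lemma fS_of_empty (x : X) : fS d ∅ x = 1 := by
  simp [fS]

lemma fS_nonneg (hd : IsPseudometric d) (S : Set X) (x : X) : 0 ≤ fS d S x := by
  rcases S.eq_empty_or_nonempty with rfl | hS
  · simp [fS_of_empty]
  · rw [fS_of_nonempty hS]
    exact le_min zero_le_one (distSet_nonneg hd hS x)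

lemma fS_le_one (S : Set X) (x : X) : fS d S x ≤ 1 := by
  rcases S.eq_empty_or_nonempty with rfl | hS
  · simp [fS_of_empty]
  · rw [fS_of_nonempty hS]
    exact min_le_left _ _

lemma fS_eq_zero_of_mem (hd : IsPseudometric d) {S : Set X} {x : X} (hx : x ∈ S) :
    fS d S x = 0 := by
  rw [fS_of_nonempty ⟨x, hx⟩, distSet_eq_zero_of_mem hd hx]
  exact min_eq_right zero_le_one

lemma fS_eq_one_of_le {S : Set X} {x : X} (h : ∀ s ∈ S, 1 ≤ d x s) : fS d S x = 1 := by
  rcases S.eq_empty_or_nonempty with rfl | hS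
  · exact fS_of_empty x
  · rw [fS_of_nonempty hS]
    exact min_eq_left (le_distSet hS h)

lemma abs_fS_sub_le (hd : IsPseudometric d) (S : Set X) (x y : X) :
    |fS d S x - fS d S y| ≤ d x y := by
  rcases S.eq_empty_or_nonempty with rfl | hS
  · simp [fS_of_empty, hd.2.2.1 x y]
  · rw [fS_of_nonempty hS, fS_of_nonempty hS]
    exact (abs_min_sub_min_le_max _ _ _ _).trans (by simpa using abs_distSet_sub_le hd hS x y)

lemma fS_anti (hd : IsPseudometric d) {S T : Set X} (hST : S ⊆ T) (x : X) :
    fS d T x ≤ fS d S x := by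
  rcases S.eq_empty_or_nonempty with rfl | hS
  · exact (fS_of_empty (d := d) x).symm ▸ fS_le_one (d := d) T x
  · rw [fS_of_nonempty hS, fS_of_nonempty (hS.mono hST)]
    exact min_le_min le_rfl (distSet_anti hd hS hST x)

lemma fS_le_of_mem (hd : IsPseudometric d) {S : Set X} {s : X} (hs : s ∈ S) (x : X) :
    fS d S x ≤ d x s := by
  rw [fS_of_nonempty ⟨s, hs⟩]
  exact (min_le_right _ _).trans (distSet_le_of_mem hd hs x)

lemma one_lt_or_exists_lt_of_fS_lt {S : Set X} {x : X} {a : ℝ} (ha : fS d S x < a) :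
    1 < a ∨ ∃ s ∈ S, d x s < a := by
  rcases S.eq_empty_or_nonempty with rfl | hS
  · exact .inl (fS_of_empty (d := d) x ▸ ha)
  rw [fS_of_nonempty hS, min_lt_iff] at ha
  refine ha.imp_right fun h => ?_
  obtain ⟨_, ⟨s, hs, rfl⟩, hsa⟩ := exists_lt_of_csInf_lt (hS.image (d x)) h
  exact ⟨s, hs, hsa⟩

lemma tendsto_fS_finset (hd : IsPseudometric d) (S : Set X) (x : X) :
    Tendsto (fun F : Finset S => fS d ((↑) '' (F : Set S)) x) atTop (𝓝 (fS d S x)) := by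
  refine tendsto_order.2 ⟨fun a ha => .of_forall fun F =>
    ha.trans_le (fS_anti hd (Subtype.coe_image_subset S _) x), fun a ha => ?_⟩
  rcases one_lt_or_exists_lt_of_fS_lt ha with h1 | ⟨s, hs, hsa⟩
  · exact .of_forall fun F => (fS_le_one _ x).trans_lt h1
  · refine eventually_atTop.2 ⟨{⟨s, hs⟩}, fun F hF => (fS_le_of_mem hd ?_ x).trans_lt hsa⟩
    exact mem_image_of_mem _ (Finset.mem_coe.2 (Finset.singleton_subset_iff.1 hF))

end Pseudometric

noncomputable def tailFun {X : Type*} (d : X → X → ℝ) (S : Set X) (F : Finset S) (x : X) : ℝ :=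
  fS d ((↑) '' (F : Set S)) x - fS d S x

section TailFun

variable {X : Type*} {d : X → X → ℝ}

lemma tailFun_mem_Lip (hd : IsPseudometric d) (S : Set X) (F : Finset S) :
    tailFun d S F ∈ Lip fun x y => 2 * d x y := by
  have hsub : (↑) '' (F : Set S) ⊆ S := Subtype.coe_image_subset S _
  refine ⟨fun x => abs_le.2 ⟨?_, ?_⟩, fun x y => ?_⟩ <;> unfold tailFun
  · linarith [fS_anti hd hsub x, fS_le_one (d := d) S x]
  · linarith [fS_le_one (d := d) ((↑) '' (F : Set S)) x, fS_nonneg hd S x]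
  · have hF := abs_le.1 (abs_fS_sub_le hd ((↑) '' (F : Set S)) x y)
    have hS := abs_le.1 (abs_fS_sub_le hd S x y)
    exact abs_le.2 ⟨by linarith, by linarith⟩

lemma tendsto_tailFun (hd : IsPseudometric d) (S : Set X) (x : X) :
    Tendsto (fun F => tailFun d S F x) atTop (𝓝 0) := by
  simpa [tailFun] using (tendsto_fS_finset hd S x).sub_const (fS d S x)

lemma tailFun_eq_one (hd : IsPseudometric d) {S : Set X}
    (hS : ∀ s ∈ S, ∀ t ∈ S, s ≠ t → 1 ≤ d s t) {F : Finset S} {y : S} (hy : y ∉ F) :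
    tailFun d S F y = 1 := by
  have hfar : ∀ s ∈ (↑) '' (F : Set S), 1 ≤ d y s := by
    rintro _ ⟨t, ht, rfl⟩
    exact hS y y.2 t t.2 fun h => hy (Subtype.ext h ▸ ht)
  rw [tailFun, fS_eq_one_of_le hfar, fS_eq_zero_of_mem hd y.2, sub_zero]

end TailFun

section Uniform

open scoped Uniformity

variable {X : Type*} [UniformSpace X] {d : X → X → ℝ}

lemma tendsto_uniformity_of_uniformContinuous (hd0 : ∀ x, d x x = 0)
    (hduc : UniformContinuous fun p : X × X => d p.1 p.2) :
    Tendsto (fun p : X × X => d p.1 p.2) (𝓤 X) (𝓝 0) := by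
  have hdiag : Tendsto (fun p : X × X => ((p.1, p.1), p)) (𝓤 X) (𝓤 (X × X)) := by
    rw [uniformity_prod_eq_comap_prod, tendsto_comap_iff]
    exact (tendsto_diag_uniformity Prod.fst _).prodMk tendsto_id
  have h := Tendsto.comp hduc hdiag
  rw [Metric.uniformity_eq_comap_nhds_zero, tendsto_comap_iff] at h
  exact (tendsto_zero_iff_abs_tendsto_zero _).2
    (by simpa [Function.comp_def, hd0, Real.dist_eq, abs_sub_comm] using h)

lemma uniformContinuous_of_abs_sub_le (hd0 : ∀ x, d x x = 0)
    (hduc : UniformContinuous fun p : X × X => d p.1 p.2) {f : X → ℝ}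
    (hf : ∀ x y, |f x - f y| ≤ d x y) : UniformContinuous f := by
  rw [UniformContinuous, Metric.uniformity_eq_comap_nhds_zero, tendsto_comap_iff]
  have hlim := tendsto_uniformity_of_uniformContinuous hd0 hduc
  refine squeeze_zero' (.of_forall fun p => dist_nonneg) (.of_forall fun p => ?_) hlim
  simpa [Real.dist_eq] using hf p.1 p.2

lemma measurable_cozMS_of_uniformContinuous {f : X → ℝ} (hf : UniformContinuous f) :
    Measurable[cozMS X] f := by
  let := cozMS X
  refine measurable_of_Ioi fun a => ?_
  have hclip : LipschitzWith 1 fun t : ℝ => min (max t 0) 1 :=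
    (LipschitzWith.id.max_const 0).min_const 1
  have hcoz : f ⁻¹' Ioi a = {x | min (max (f x - a) 0) 1 ≠ 0} := by
    ext x
    simp only [mem_preimage, mem_Ioi, mem_ofPred_eq]
    constructor
    · intro hx
      exact (lt_min (lt_max_of_lt_left (sub_pos.2 hx)) one_pos).ne'
    · intro hx
      by_contra hle
      exact hx (by rw [max_eq_right (by linarith : f x - a ≤ 0), min_eq_left zero_le_one])
  rw [hcoz]
  refine MeasurableSpace.measurableSet_generateFrom
    ⟨_, hclip.uniformContinuous.comp (hf.sub uniformContinuous_const), ⟨1, fun x => ?_⟩, rfl⟩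
  show |min (max (f x - a) 0) 1| ≤ 1
  have h0 : 0 ≤ min (max (f x - a) 0) 1 := le_min (le_max_right _ _) zero_le_one
  exact abs_le.2 ⟨by linarith, min_le_right _ _⟩

end Uniform

lemma integral_map_eq_measureReal_univ {X S : Type*} [MeasurableSpace X] [MeasurableSpace S]
    {ν : Measure S} {j : S → X} (hj : Measurable j) {f : X → ℝ} (hf : Measurable f)
    (h : ∀ᵐ y ∂ν, f (j y) = 1) : ∫ x, f x ∂ν.map j = ν.real univ := by
  rw [integral_map hj.aemeasurable hf.aestronglyMeasurable, integral_congr_ae h]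
  simp

/-- if `X` has a uniformly discrete subset whose cardinality does not have
measure zero, then some finite countably additive measure on `σ(Coz X)` integrates to a
functional that is not a uniform measure. -/
theorem not_dspace_gives_nonuniform_measure {X : Type u} [UniformSpace X]
    (h : ∃ Y : Set X, UniformlyDiscrete Y ∧ ¬ HasMeasureZero Y) :
    ∃ m : @MeasureTheory.Measure X (cozMS X),
      @MeasureTheory.IsFiniteMeasure X (cozMS X) m ∧
      ∃ d : X → X → ℝ, IsPseudometric d ∧
        (UniformContinuous fun p : X × X => d p.1 p.2) ∧
        ∃ (ι : Type u) (pι : Preorder ι), IsDirected ι pι.le ∧ Nonempty ι ∧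
          ∃ f : ι → X → ℝ, (∀ i, f i ∈ Lip d) ∧
            (∀ x, Tendsto (fun i => f i x) (@Filter.atTop ι pι) (𝓝 0)) ∧
            ¬ Tendsto (fun i => ∫ x, f i x ∂m) (@Filter.atTop ι pι) (𝓝 0) := by
  obtain ⟨Y, ⟨d, hd, hduc, ε, hε, hsep⟩, hY⟩ := h
  simp only [HasMeasureZero, not_forall] at hY
  obtain ⟨ν, hfin, hsing, hν⟩ := hY
  let := cozMS X
  let : MeasurableSpace Y := ⊤
  have : NullSingletonClass ν := ⟨hsing⟩
  set e : X → X → ℝ := fun x y => ε⁻¹ * d x y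
  have he : IsPseudometric e := hd.const_mul (inv_nonneg.2 hε.le)
  have hYe : ∀ s ∈ Y, ∀ t ∈ Y, s ≠ t → 1 ≤ e s t := fun s hs t ht hst =>
    (le_inv_mul_iff₀ hε).2 (by simpa using hsep s hs t ht hst)
  have heuc : UniformContinuous fun p : X × X => 2 * e p.1 p.2 :=
    Real.uniformContinuous_const_mul.comp (Real.uniformContinuous_const_mul.comp hduc)
  have hint : ∀ F : Finset Y, ∫ x, tailFun e Y F x ∂ν.map (↑) = ν.real univ := fun F =>
    integral_map_eq_measureReal_univ measurable_from_top
      (measurable_cozMS_of_uniformContinuous <|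
        uniformContinuous_of_abs_sub_le (fun x => by simp [he.1 x]) heuc
          (tailFun_mem_Lip he Y F).2)
      ((measure_eq_zero_iff_ae_notMem.1 ((Finset.finite_toSet F).measure_zero ν)).mono
        fun y hy => tailFun_eq_one he hYe hy)
  refine ⟨ν.map (↑), Measure.isFiniteMeasure_map ν _, fun x y => 2 * e x y,
    he.const_mul zero_le_two, heuc, Finset Y, inferInstance, inferInstance, ⟨∅⟩, tailFun e Y,
    tailFun_mem_Lip he Y, tendsto_tailFun he Y, ?_⟩
  simp_rw [hint, tendsto_const_nhds_iff]
  exact (measureReal_ne_zero_iff (measure_ne_top ν _)).2 hν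
end

section
/- Let X be a uniform space and μ ∈ M(X) a bounded linear functional on U_b(X) that is continuous on Lip(d) (pointwise topology) for every separable uniformly continuous pseudometric d on X. Then for every uniformly continuous pseudometric d (not necessarily separable) and every sequence f_n ∈ Lip(d) with f_n → 0 pointwise, μ(f_n) → 0. -/
open Filter MeasureTheory Topology Set

/-!
The pseudometric `d̃ x y = ⨆ n, |f n x - f n y|` is the pullback of the sup metric along
`x ↦ (f n x)ₙ : X → ℕ →ᵇ ℝ`. It is dominated by `d`, hence uniformly continuous; since
`f n → 0` pointwise the image lies in the separable subspace `c₀`, so `d̃` is separable; and every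
`f n` lies in `Lip d̃`. Continuity of `μ` on `Lip d̃` along the directed set `ℕ` gives the claim.
-/

open scoped Uniformity

section Pseudometric

variable {X : Type*}

theorem isPseudometric_dist_comp {E : Type*} [PseudoMetricSpace E] (F : X → E) :
    IsPseudometric fun x y => dist (F x) (F y) :=
  ⟨fun _ => dist_self _, fun _ _ => dist_comm _ _, fun _ _ => dist_nonneg,
    fun _ _ _ => dist_triangle _ _ _⟩

theorem dSeparable_dist_comp {E : Type*} [PseudoMetricSpace E] {F : X → E}
    (hF : TopologicalSpace.IsSeparable (range F)) : DSeparable fun x y => dist (F x) (F y) := by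
  obtain ⟨t, hts, htc, hdense⟩ := hF.exists_countable_dense_subset
  refine ⟨rangeSplitting F '' (Subtype.val ⁻¹' t),
    (htc.preimage Subtype.val_injective).image _, fun x ε hε => ?_⟩
  obtain ⟨p, hpt, hp⟩ := Metric.mem_closure_iff.1 (hdense (mem_range_self x)) ε hε
  refine ⟨rangeSplitting F ⟨p, hts hpt⟩, mem_image_of_mem _ hpt, ?_⟩
  simpa only [apply_rangeSplitting] using hp

variable [UniformSpace X] {d : X → X → ℝ}

theorem setOf_lt_mem_uniformity (hd : ∀ x, d x x = 0)
    (hdu : UniformContinuous fun p : X × X => d p.1 p.2) {ε : ℝ} (hε : 0 < ε) :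
    {p : X × X | d p.1 p.2 < ε} ∈ 𝓤 X := by
  -- `d x y = d x y - d y y`, and `((x, y), (y, y))` is close in `X × X` when `(x, y)` is in `X`.
  have hdiag : Tendsto (fun p : X × X => ((p.1, p.2), (p.2, p.2))) (𝓤 X) (𝓤 (X × X)) := by
    rw [uniformity_prod]
    exact tendsto_inf.2 ⟨tendsto_comap_iff.2 tendsto_id,
      tendsto_comap_iff.2 (tendsto_diag_uniformity _ _)⟩
  filter_upwards [(Tendsto.comp hdu hdiag) (Metric.dist_mem_uniformity hε)] with p hp
  simp only [mem_preimage, mem_ofPred_eq, Function.comp_apply, hd, Real.dist_eq,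
    sub_zero] at hp
  exact (le_abs_self _).trans_lt hp

theorem uniformContinuous_of_dist_le {E : Type*} [PseudoMetricSpace E] {F : X → E}
    (hd : ∀ x, d x x = 0) (hdu : UniformContinuous fun p : X × X => d p.1 p.2)
    (hF : ∀ x y, dist (F x) (F y) ≤ d x y) : UniformContinuous F := by
  rw [UniformContinuous, Metric.uniformity_basis_dist.tendsto_right_iff]
  intro ε hε
  filter_upwards [setOf_lt_mem_uniformity hd hdu hε] with p hp
  exact (hF p.1 p.2).trans_lt hp

end Pseudometric

namespace BoundedContinuousFunction

def extendByZero {N : ℕ} (v : Fin N → ℝ) : ℕ →ᵇ ℝ :=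
  ofNormedAddCommGroupDiscrete (fun n => if h : n < N then v ⟨n, h⟩ else 0) ‖v‖ fun n => by
    split_ifs
    · exact norm_le_pi_norm v _
    · simp

theorem isSeparable_setOf_tendsto_zero :
    TopologicalSpace.IsSeparable {g : ℕ →ᵇ ℝ | Tendsto g atTop (𝓝 0)} := by
  refine ⟨range fun p : Σ N, Fin N → ℚ => extendByZero fun i => (p.2 i : ℝ),
    countable_range _, fun g hg => Metric.mem_closure_iff.2 fun ε hε => ?_⟩
  obtain ⟨N, hN⟩ := Metric.tendsto_atTop.1 hg (ε / 2) (half_pos hε)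
  choose q hq using fun i : Fin N => exists_rat_near (g i) (half_pos hε)
  refine ⟨_, mem_range_self ⟨N, q⟩, lt_of_le_of_lt ((dist_le (half_pos hε).le).2 fun n => ?_)
    (half_lt_self hε)⟩
  simp only [extendByZero, coe_ofNormedAddCommGroupDiscrete, Real.dist_eq]
  split_ifs with h
  · exact (hq ⟨n, h⟩).le
  · simpa using (hN n (not_lt.1 h)).le

section SeqMap

variable {X : Type*} (f : ℕ → X → ℝ) {C : ℝ} (hf : ∀ n x, |f n x| ≤ C)

def seqMap (x : X) : ℕ →ᵇ ℝ :=
  ofNormedAddCommGroupDiscrete (fun n => f n x) C fun n => hf n x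

@[simp]
theorem seqMap_apply (x : X) (n : ℕ) : seqMap f hf x n = f n x := rfl

theorem abs_sub_le_dist_seqMap (n : ℕ) (x y : X) :
    |f n x - f n y| ≤ dist (seqMap f hf x) (seqMap f hf y) := by
  simpa only [seqMap_apply, Real.dist_eq] using
    dist_coe_le_dist (f := seqMap f hf x) (g := seqMap f hf y) n

theorem dist_seqMap_le {d : X → X → ℝ} (hd : ∀ n x y, |f n x - f n y| ≤ d x y) (x y : X) :
    dist (seqMap f hf x) (seqMap f hf y) ≤ d x y :=
  (dist_le ((abs_nonneg _).trans (hd 0 x y))).2 fun n => by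
    simpa only [seqMap_apply, Real.dist_eq] using hd n x y

theorem range_seqMap_subset (h0 : ∀ x, Tendsto (fun n => f n x) atTop (𝓝 0)) :
    range (seqMap f hf) ⊆ {g | Tendsto g atTop (𝓝 0)} := by
  rintro _ ⟨x, rfl⟩
  exact h0 x

end SeqMap

end BoundedContinuousFunction

open BoundedContinuousFunction in
theorem exists_separable_pseudometric_forall_mem_lip {X : Type*} [UniformSpace X]
    {d : X → X → ℝ} (hd : ∀ x, d x x = 0)
    (hdu : UniformContinuous fun p : X × X => d p.1 p.2) {f : ℕ → X → ℝ} (hf : ∀ n, f n ∈ Lip d)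
    (h0 : ∀ x, Tendsto (fun n => f n x) atTop (𝓝 0)) :
    ∃ d' : X → X → ℝ, IsPseudometric d' ∧
      (UniformContinuous fun p : X × X => d' p.1 p.2) ∧
      DSeparable d' ∧ ∀ n, f n ∈ Lip d' := by
  set F := seqMap f fun n x => (hf n).1 x
  have hF : UniformContinuous F :=
    uniformContinuous_of_dist_le hd hdu (dist_seqMap_le _ _ fun n => (hf n).2)
  exact ⟨fun x y => dist (F x) (F y), isPseudometric_dist_comp F,
    uniformContinuous_dist.comp (hF.prodMap hF),
    dSeparable_dist_comp (isSeparable_setOf_tendsto_zero.mono (range_seqMap_subset _ _ h0)),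
    fun n => ⟨(hf n).1, abs_sub_le_dist_seqMap _ _ n⟩⟩

theorem cont_separable_to_seqCont_general {X : Type u} [UniformSpace X]
    (μ : (X → ℝ) →ₗ[ℝ] ℝ)
    (hcont : ∀ d : X → X → ℝ, IsPseudometric d →
      (UniformContinuous fun p : X × X => d p.1 p.2) → DSeparable d →
      ∀ (ι : Type u) (pι : Preorder ι), IsDirected ι pι.le → Nonempty ι →
        ∀ f : ι → X → ℝ, (∀ i, f i ∈ Lip d) →
          (∀ x, Tendsto (fun i => f i x) (@Filter.atTop ι pι) (𝓝 0)) →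
          Tendsto (fun i => μ (f i)) (@Filter.atTop ι pι) (𝓝 0))
    (d : X → X → ℝ) (hd : IsPseudometric d)
    (hdu : UniformContinuous fun p : X × X => d p.1 p.2)
    (f : ℕ → X → ℝ) (hf : ∀ n, f n ∈ Lip d)
    (h0 : ∀ x, Tendsto (fun n => f n x) atTop (𝓝 0)) :
    Tendsto (fun n => μ (f n)) atTop (𝓝 0) := by
  obtain ⟨d', hd', hdu', hsep, hf'⟩ :=
    exists_separable_pseudometric_forall_mem_lip hd.1 hdu hf h0
  -- `hcont` only speaks of index types in universe `u`, so index the sequence by `ULift ℕ`.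
  have hdown : map ULift.down (atTop : Filter (ULift.{u} ℕ)) = atTop :=
    (ULift.orderIso.{u} (α := ℕ)).map_atTop
  rw [← hdown, tendsto_map'_iff]
  exact hcont d' hd' hdu' hsep (ULift ℕ) inferInstance inferInstance ⟨⟨0⟩⟩
    (fun i => f i.down) (fun i => hf' i.down) fun x => (h0 x).comp hdown.le

/-- a bounded linear functional on `U_b(X)` continuous on `Lip d` for all
separable u.c. pseudometrics `d` is sequentially continuous on `Lip d` for all u.c.
pseudometrics `d`. -/
theorem cont_separable_to_seqCont {X : Type u} [UniformSpace X]
    (μ : (X → ℝ) →ₗ[ℝ] ℝ)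
    (hbdd : ∃ C : ℝ, ∀ f : X → ℝ, UniformContinuous f → ∀ B : ℝ,
      (∀ x, |f x| ≤ B) → |μ f| ≤ C * B)
    (hcont : ∀ d : X → X → ℝ, IsPseudometric d →
      (UniformContinuous fun p : X × X => d p.1 p.2) → DSeparable d →
      ∀ (ι : Type u) (pι : Preorder ι), IsDirected ι pι.le → Nonempty ι →
        ∀ f : ι → X → ℝ, (∀ i, f i ∈ Lip d) →
          (∀ x, Tendsto (fun i => f i x) (@Filter.atTop ι pι) (𝓝 0)) →
          Tendsto (fun i => μ (f i)) (@Filter.atTop ι pι) (𝓝 0))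
    (d : X → X → ℝ) (hd : IsPseudometric d)
    (hdu : UniformContinuous fun p : X × X => d p.1 p.2)
    (f : ℕ → X → ℝ) (hf : ∀ n, f n ∈ Lip d)
    (h0 : ∀ x, Tendsto (fun n => f n x) atTop (𝓝 0)) :
    Tendsto (fun n => μ (f n)) atTop (𝓝 0) :=
  cont_separable_to_seqCont_general μ hcont d hd hdu f hf h0
end
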